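/- Let (V, α, β, ⊙, ε, i, V₀) be a generalized vector groupoid and h : X → V₀ a linear map between vector spaces. Then h*(V) = {(x,y,a) ∈ X × X × V | h(x)=α(a), h(y)=β(a)} with α*(x,y,a)=x, β*(x,y,a)=y, i*(x,y,a)=(y,x,i(a)), ε*(x)=(x,x,ε(h(x))), and (x,y,a)⊙(y,z,b)=(x,z,a⊙b), is a generalized vector groupoid over X. Moreover, if (V,V₀) is transitive (its anchor map is surjective), then (h*(V), X) is transitive. -/
import Mathlib


/-- An Ehresmann groupoid `(G, α, β, mul, ε, inv, G₀)`.
The multiplication is encoded as a total map, with all axioms only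
required on composable pairs; condition (G1) of the paper ("if one of the
two products is defined then so is the other, and they are equal") is
encoded in the `assoc` field.  Conditions (G2), (G3) include the
composability assertions of the paper. -/
structure EhresmannGroupoid (G : Type*) (G₀ : Type*) where
  α : G → G₀
  β : G → G₀
  mul : G → G → G
  ε : G₀ → G
  inv : G → G
  α_surj : Function.Surjective α
  β_surj : Function.Surjective β
  ε_inj : Function.Injective ε
  assoc : ∀ x y z : G,
    ((β x = α y ∧ β (mul x y) = α z) ∨ (β y = α z ∧ β x = α (mul y z))) →
    β x = α y ∧ β (mul x y) = α z ∧ β y = α z ∧ β x = α (mul y z) ∧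
      mul (mul x y) z = mul x (mul y z)
  comp_unit_left : ∀ x : G, β (ε (α x)) = α x
  comp_unit_right : ∀ x : G, β x = α (ε (β x))
  unit_mul : ∀ x : G, mul (ε (α x)) x = x
  mul_unit : ∀ x : G, mul x (ε (β x)) = x
  comp_inv_left : ∀ x : G, β (inv x) = α x
  comp_inv_right : ∀ x : G, β x = α (inv x)
  inv_mul : ∀ x : G, mul (inv x) x = ε (β x)
  mul_inv : ∀ x : G, mul x (inv x) = ε (α x)

/-- A generalized vector groupoid over a field `K` (Definition 3.1):
an Ehresmann groupoid whose total space and base are `K`-vector spaces,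
whose structure maps `α, β, ε, inv` are linear, satisfying
`x + x⁻¹ = ε(α x) + ε(β x)` and the four compatibility conditions of the
partial multiplication with the linear structure. -/
structure VectorGroupoid (K : Type*) [Field K] (V : Type*) (V₀ : Type*)
    [AddCommGroup V] [Module K V] [AddCommGroup V₀] [Module K V₀]
    extends EhresmannGroupoid V V₀ where
  α_linear : IsLinearMap K α
  β_linear : IsLinearMap K β
  ε_linear : IsLinearMap K ε
  inv_linear : IsLinearMap K inv
  add_inv : ∀ x : V, x + inv x = ε (α x) + ε (β x)
  mul_add' : ∀ x y z : V, α y = β x → α z = β x →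
    mul x (y + z - ε (β x)) = mul x y + mul x z - x
  mul_smul' : ∀ (k : K) (x y : V), α y = β x →
    mul x (k • y + (1 - k) • ε (β x)) = k • mul x y + (1 - k) • x
  add_mul' : ∀ x y z : V, α x = β y → α x = β z →
    mul (y + z - ε (α x)) x = mul y x + mul z x - x
  smul_mul' : ∀ (k : K) (x y : V), α x = β y →
    mul (k • y + (1 - k) • ε (α x)) x = k • mul y x + (1 - k) • x

/-- The carrier `h*(V) = {(x,y,a) | h x = α a, h y = β a}` of the induced
groupoid, as a submodule of `X × X × V`. -/
def inducedCarrier {K X V V₀ : Type*} [Field K]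
    [AddCommGroup X] [Module K X] [AddCommGroup V] [Module K V]
    [AddCommGroup V₀] [Module K V₀]
    (E : VectorGroupoid K V V₀) (h : X →ₗ[K] V₀) : Submodule K (X × X × V) where
  carrier := {p | h p.1 = E.α p.2.2 ∧ h p.2.1 = E.β p.2.2}
  add_mem' := by
    intro a b ha hb
    refine ⟨?_, ?_⟩
    · show h (a.1 + b.1) = E.α (a.2.2 + b.2.2)
      rw [map_add, E.α_linear.map_add, ha.1, hb.1]
    · show h (a.2.1 + b.2.1) = E.β (a.2.2 + b.2.2)
      rw [map_add, E.β_linear.map_add, ha.2, hb.2]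
  zero_mem' := by
    constructor
    · show h 0 = E.α 0
      rw [map_zero, ← E.α_linear.map_zero]
    · show h 0 = E.β 0
      rw [map_zero, ← E.β_linear.map_zero]
  smul_mem' := by
    intro c a ha
    refine ⟨?_, ?_⟩
    · show h (c • a.1) = E.α (c • a.2.2)
      rw [map_smul, E.α_linear.map_smul, ha.1]
    · show h (c • a.2.1) = E.β (c • a.2.2)
      rw [map_smul, E.β_linear.map_smul, ha.2]


section Aux

lemma EhresmannGroupoid.alpha_eps {G G₀ : Type*} (E : EhresmannGroupoid G G₀) (v : G₀) :
    E.α (E.ε v) = v := by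
  obtain ⟨x, hx⟩ := E.β_surj v
  rw [← hx]; exact (E.comp_unit_right x).symm

lemma EhresmannGroupoid.beta_eps {G G₀ : Type*} (E : EhresmannGroupoid G G₀) (v : G₀) :
    E.β (E.ε v) = v := by
  obtain ⟨x, hx⟩ := E.α_surj v
  rw [← hx]; exact E.comp_unit_left x

lemma EhresmannGroupoid.alpha_mul {G G₀ : Type*} (E : EhresmannGroupoid G G₀) {a b : G}
    (hab : E.β a = E.α b) : E.α (E.mul a b) = E.α a := by
  have H := E.assoc (E.ε (E.α a)) a b
    (Or.inl ⟨E.comp_unit_left a, by rw [E.unit_mul]; exact hab⟩)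
  rw [← H.2.2.2.1, E.comp_unit_left]

lemma EhresmannGroupoid.beta_mul {G G₀ : Type*} (E : EhresmannGroupoid G G₀) {a b : G}
    (hab : E.β a = E.α b) : E.β (E.mul a b) = E.β b := by
  have H := E.assoc a b (E.ε (E.β b))
    (Or.inr ⟨E.comp_unit_right b, by rw [E.mul_unit]; exact hab⟩)
  rw [H.2.1, ← E.comp_unit_right]

variable {K X V V₀ : Type*} [Field K]
    [AddCommGroup X] [Module K X] [AddCommGroup V] [Module K V]
    [AddCommGroup V₀] [Module K V₀]
    (E : VectorGroupoid K V V₀) (h : X →ₗ[K] V₀)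

lemma mem1 (p : inducedCarrier E h) : h (p : X × X × V).1 = E.α (p : X × X × V).2.2 := p.2.1

lemma mem2 (p : inducedCarrier E h) : h (p : X × X × V).2.1 = E.β (p : X × X × V).2.2 := p.2.2

lemma comp_of (p q : inducedCarrier E h) (hc : (p : X × X × V).2.1 = (q : X × X × V).1) :
    E.β (p : X × X × V).2.2 = E.α (q : X × X × V).2.2 := by
  rw [← mem2 E h p, hc, mem1 E h q]

open Classical in
/-- The multiplication on the induced carrier (junk value `0` on
non-composable pairs). -/
noncomputable def inducedMul (p q : inducedCarrier E h) : inducedCarrier E h :=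
  if hc : (p : X × X × V).2.1 = (q : X × X × V).1 then
    ⟨((p : X × X × V).1, (q : X × X × V).2.1,
        E.mul (p : X × X × V).2.2 (q : X × X × V).2.2), by
      have hab := comp_of E h p q hc
      constructor
      · rw [mem1 E h p, E.toEhresmannGroupoid.alpha_mul hab]
      · rw [mem2 E h q, E.toEhresmannGroupoid.beta_mul hab]⟩
  else 0

lemma inducedMul_def (p q : inducedCarrier E h)
    (hc : (p : X × X × V).2.1 = (q : X × X × V).1) :
    (inducedMul E h p q : X × X × V) =
      ((p : X × X × V).1, (q : X × X × V).2.1,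
        E.mul (p : X × X × V).2.2 (q : X × X × V).2.2) := by
  simp [inducedMul, hc]

/-- The unit map of the induced groupoid. -/
def inducedEps (x : X) : inducedCarrier E h :=
  ⟨(x, x, E.ε (h x)),
    ⟨(E.toEhresmannGroupoid.alpha_eps (h x)).symm,
     (E.toEhresmannGroupoid.beta_eps (h x)).symm⟩⟩

/-- The inversion of the induced groupoid. -/
def inducedInv (p : inducedCarrier E h) : inducedCarrier E h :=
  ⟨((p : X × X × V).2.1, (p : X × X × V).1, E.inv (p : X × X × V).2.2), by
    constructor
    · rw [mem2 E h p]; exact E.comp_inv_right _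
    · rw [mem1 E h p]; exact (E.comp_inv_left _).symm⟩

/-- The induced vector groupoid `h*(V)`. -/
noncomputable def inducedVG : VectorGroupoid K (inducedCarrier E h) X where
  α p := (p : X × X × V).1
  β p := (p : X × X × V).2.1
  mul := inducedMul E h
  ε := inducedEps E h
  inv := inducedInv E h
  α_surj x := ⟨inducedEps E h x, rfl⟩
  β_surj x := ⟨inducedEps E h x, rfl⟩
  ε_inj x y hxy := congrArg (fun q : inducedCarrier E h => (q : X × X × V).1) hxy
  assoc := by
    intro p q r hyp
    obtain ⟨hpq, hqr⟩ : (p : X × X × V).2.1 = (q : X × X × V).1 ∧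
        (q : X × X × V).2.1 = (r : X × X × V).1 := by
      rcases hyp with ⟨h1, h2⟩ | ⟨h1, h2⟩
      · have h1' : (p : X × X × V).2.1 = (q : X × X × V).1 := h1
        have h2' : (inducedMul E h p q : X × X × V).2.1 = (r : X × X × V).1 := h2
        rw [inducedMul_def E h p q h1'] at h2'
        exact ⟨h1', h2'⟩
      · have h1' : (q : X × X × V).2.1 = (r : X × X × V).1 := h1
        have h2' : (p : X × X × V).2.1 = (inducedMul E h q r : X × X × V).1 := h2
        rw [inducedMul_def E h q r h1'] at h2'
        exact ⟨h2', h1'⟩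
    have hab := comp_of E h p q hpq
    have hbc := comp_of E h q r hqr
    have HE := E.assoc (p : X × X × V).2.2 (q : X × X × V).2.2 (r : X × X × V).2.2
      (Or.inl ⟨hab, by rw [E.toEhresmannGroupoid.beta_mul hab]; exact hbc⟩)
    have hpq' : (inducedMul E h p q : X × X × V).2.1 = (r : X × X × V).1 := by
      rw [inducedMul_def E h p q hpq]; exact hqr
    have hqr' : (p : X × X × V).2.1 = (inducedMul E h q r : X × X × V).1 := by
      rw [inducedMul_def E h q r hqr]; exact hpq
    refine ⟨hpq, hpq', hqr, hqr', ?_⟩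
    apply Subtype.ext
    rw [inducedMul_def E h _ r hpq', inducedMul_def E h p _ hqr',
      inducedMul_def E h p q hpq, inducedMul_def E h q r hqr]
    exact Prod.ext rfl (Prod.ext rfl HE.2.2.2.2)
  comp_unit_left p := congrArg Prod.fst (Subtype.ext_iff.mp (rfl : inducedEps E h _ = _))
  comp_unit_right p := rfl
  unit_mul := by
    intro p
    apply Subtype.ext
    rw [inducedMul_def E h _ p (rfl : (inducedEps E h (p : X × X × V).1 : X × X × V).2.1 = _)]
    refine Prod.ext rfl (Prod.ext rfl ?_)
    show E.mul (E.ε (h (p : X × X × V).1)) (p : X × X × V).2.2 = (p : X × X × V).2.2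
    rw [mem1 E h p]; exact E.unit_mul _
  mul_unit := by
    intro p
    apply Subtype.ext
    rw [inducedMul_def E h p _ (rfl : (p : X × X × V).2.1 = _)]
    refine Prod.ext rfl (Prod.ext rfl ?_)
    show E.mul (p : X × X × V).2.2 (E.ε (h (p : X × X × V).2.1)) = (p : X × X × V).2.2
    rw [mem2 E h p]; exact E.mul_unit _
  comp_inv_left p := rfl
  comp_inv_right p := rfl
  inv_mul := by
    intro p
    apply Subtype.ext
    rw [inducedMul_def E h _ p (rfl : (inducedInv E h p : X × X × V).2.1 = _)]
    refine Prod.ext rfl (Prod.ext rfl ?_)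
    show E.mul (E.inv (p : X × X × V).2.2) (p : X × X × V).2.2 = E.ε (h (p : X × X × V).2.1)
    rw [mem2 E h p]; exact E.inv_mul _
  mul_inv := by
    intro p
    apply Subtype.ext
    rw [inducedMul_def E h p _ (rfl : (p : X × X × V).2.1 = _)]
    refine Prod.ext rfl (Prod.ext rfl ?_)
    show E.mul (p : X × X × V).2.2 (E.inv (p : X × X × V).2.2) = E.ε (h (p : X × X × V).1)
    rw [mem1 E h p]; exact E.mul_inv _
  α_linear := ⟨fun _ _ => rfl, fun _ _ => rfl⟩
  β_linear := ⟨fun _ _ => rfl, fun _ _ => rfl⟩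
  ε_linear := by
    constructor
    · intro x y
      apply Subtype.ext
      show ((x + y, x + y, E.ε (h (x + y))) : X × X × V) = _
      rw [map_add, E.ε_linear.map_add]
      rfl
    · intro c x
      apply Subtype.ext
      show ((c • x, c • x, E.ε (h (c • x))) : X × X × V) = _
      rw [map_smul, E.ε_linear.map_smul]
      rfl
  inv_linear := by
    constructor
    · intro p q
      apply Subtype.ext
      show (((p : X × X × V).2.1 + (q : X × X × V).2.1,
          (p : X × X × V).1 + (q : X × X × V).1,
          E.inv ((p : X × X × V).2.2 + (q : X × X × V).2.2)) : X × X × V)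
        = ((p : X × X × V).2.1, (p : X × X × V).1, E.inv (p : X × X × V).2.2)
          + ((q : X × X × V).2.1, (q : X × X × V).1, E.inv (q : X × X × V).2.2)
      rw [E.inv_linear.map_add]; rfl
    · intro c p
      apply Subtype.ext
      show ((c • (p : X × X × V).2.1, c • (p : X × X × V).1,
          E.inv (c • (p : X × X × V).2.2)) : X × X × V)
        = c • ((p : X × X × V).2.1, (p : X × X × V).1, E.inv (p : X × X × V).2.2)
      rw [E.inv_linear.map_smul]; rfl
  add_inv := by
    intro p
    apply Subtype.ext
    refine Prod.ext rfl (Prod.ext ?_ ?_)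
    · exact add_comm _ _
    · show (p : X × X × V).2.2 + E.inv (p : X × X × V).2.2
        = E.ε (h (p : X × X × V).1) + E.ε (h (p : X × X × V).2.1)
      rw [mem1 E h p, mem2 E h p]; exact E.add_inv _
  mul_add' := by
    intro p q r hq hr
    have hq' : (q : X × X × V).1 = (p : X × X × V).2.1 := hq
    have hr' : (r : X × X × V).1 = (p : X × X × V).2.1 := hr
    have hcomp : (p : X × X × V).2.1
        = ((q + r - inducedEps E h (p : X × X × V).2.1 : inducedCarrier E h)
            : X × X × V).1 := by
      show (p : X × X × V).2.1
        = (q : X × X × V).1 + (r : X × X × V).1 - (p : X × X × V).2.1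
      rw [hq', hr', add_sub_cancel_right]
    apply Subtype.ext
    rw [inducedMul_def E h p _ hcomp]
    refine Prod.ext ?_ (Prod.ext ?_ ?_)
    · show (p : X × X × V).1
        = ((inducedMul E h p q : X × X × V)
            + (inducedMul E h p r : X × X × V) - (p : X × X × V)).1
      rw [inducedMul_def E h p q hq'.symm, inducedMul_def E h p r hr'.symm]
      exact (add_sub_cancel_right _ _).symm
    · show (q : X × X × V).2.1 + (r : X × X × V).2.1 - (p : X × X × V).2.1
        = ((inducedMul E h p q : X × X × V)
            + (inducedMul E h p r : X × X × V) - (p : X × X × V)).2.1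
      rw [inducedMul_def E h p q hq'.symm, inducedMul_def E h p r hr'.symm]
      rfl
    · show E.mul (p : X × X × V).2.2
        ((q : X × X × V).2.2 + (r : X × X × V).2.2 - E.ε (h (p : X × X × V).2.1))
        = ((inducedMul E h p q : X × X × V)
            + (inducedMul E h p r : X × X × V) - (p : X × X × V)).2.2
      rw [inducedMul_def E h p q hq'.symm, inducedMul_def E h p r hr'.symm,
        mem2 E h p]
      exact E.mul_add' _ _ _ (comp_of E h p q hq'.symm).symm
        (comp_of E h p r hr'.symm).symm
  mul_smul' := by
    intro k p q hq
    have hq' : (q : X × X × V).1 = (p : X × X × V).2.1 := hq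
    have hcomp : (p : X × X × V).2.1
        = ((k • q + (1 - k) • inducedEps E h (p : X × X × V).2.1 : inducedCarrier E h)
            : X × X × V).1 := by
      show (p : X × X × V).2.1
        = k • (q : X × X × V).1 + (1 - k) • (p : X × X × V).2.1
      rw [hq', ← add_smul, add_sub_cancel, one_smul]
    apply Subtype.ext
    rw [inducedMul_def E h p _ hcomp]
    refine Prod.ext ?_ (Prod.ext ?_ ?_)
    · show (p : X × X × V).1
        = (k • (inducedMul E h p q : X × X × V) + (1 - k) • (p : X × X × V)).1
      rw [inducedMul_def E h p q hq'.symm]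
      show (p : X × X × V).1 = k • (p : X × X × V).1 + (1 - k) • (p : X × X × V).1
      rw [← add_smul, add_sub_cancel, one_smul]
    · show k • (q : X × X × V).2.1 + (1 - k) • (p : X × X × V).2.1
        = (k • (inducedMul E h p q : X × X × V) + (1 - k) • (p : X × X × V)).2.1
      rw [inducedMul_def E h p q hq'.symm]
      rfl
    · show E.mul (p : X × X × V).2.2
        (k • (q : X × X × V).2.2 + (1 - k) • E.ε (h (p : X × X × V).2.1))
        = (k • (inducedMul E h p q : X × X × V) + (1 - k) • (p : X × X × V)).2.2
      rw [inducedMul_def E h p q hq'.symm, mem2 E h p]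
      exact E.mul_smul' k _ _ (comp_of E h p q hq'.symm).symm
  add_mul' := by
    intro p q r hq hr
    have hq' : (p : X × X × V).1 = (q : X × X × V).2.1 := hq
    have hr' : (p : X × X × V).1 = (r : X × X × V).2.1 := hr
    have hcomp : ((q + r - inducedEps E h (p : X × X × V).1 : inducedCarrier E h)
        : X × X × V).2.1 = (p : X × X × V).1 := by
      show (q : X × X × V).2.1 + (r : X × X × V).2.1 - (p : X × X × V).1
        = (p : X × X × V).1
      rw [← hq', ← hr', add_sub_cancel_right]
    apply Subtype.ext
    rw [inducedMul_def E h _ p hcomp]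
    refine Prod.ext ?_ (Prod.ext ?_ ?_)
    · show (q : X × X × V).1 + (r : X × X × V).1 - (p : X × X × V).1
        = ((inducedMul E h q p : X × X × V)
            + (inducedMul E h r p : X × X × V) - (p : X × X × V)).1
      rw [inducedMul_def E h q p hq'.symm, inducedMul_def E h r p hr'.symm]
      rfl
    · show (p : X × X × V).2.1
        = ((inducedMul E h q p : X × X × V)
            + (inducedMul E h r p : X × X × V) - (p : X × X × V)).2.1
      rw [inducedMul_def E h q p hq'.symm, inducedMul_def E h r p hr'.symm]
      exact (add_sub_cancel_right _ _).symm
    · show E.mul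
        ((q : X × X × V).2.2 + (r : X × X × V).2.2 - E.ε (h (p : X × X × V).1))
        (p : X × X × V).2.2
        = ((inducedMul E h q p : X × X × V)
            + (inducedMul E h r p : X × X × V) - (p : X × X × V)).2.2
      rw [inducedMul_def E h q p hq'.symm, inducedMul_def E h r p hr'.symm,
        mem1 E h p]
      exact E.add_mul' _ _ _ (comp_of E h q p hq'.symm).symm
        (comp_of E h r p hr'.symm).symm
  smul_mul' := by
    intro k p q hq
    have hq' : (p : X × X × V).1 = (q : X × X × V).2.1 := hq
    have hcomp : ((k • q + (1 - k) • inducedEps E h (p : X × X × V).1 : inducedCarrier E h)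
        : X × X × V).2.1 = (p : X × X × V).1 := by
      show k • (q : X × X × V).2.1 + (1 - k) • (p : X × X × V).1 = (p : X × X × V).1
      rw [← hq', ← add_smul, add_sub_cancel, one_smul]
    apply Subtype.ext
    rw [inducedMul_def E h _ p hcomp]
    refine Prod.ext ?_ (Prod.ext ?_ ?_)
    · show k • (q : X × X × V).1 + (1 - k) • (p : X × X × V).1
        = (k • (inducedMul E h q p : X × X × V) + (1 - k) • (p : X × X × V)).1
      rw [inducedMul_def E h q p hq'.symm]
      rfl
    · show (p : X × X × V).2.1
        = (k • (inducedMul E h q p : X × X × V) + (1 - k) • (p : X × X × V)).2.1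
      rw [inducedMul_def E h q p hq'.symm]
      show (p : X × X × V).2.1
        = k • (p : X × X × V).2.1 + (1 - k) • (p : X × X × V).2.1
      rw [← add_smul, add_sub_cancel, one_smul]
    · show E.mul
        (k • (q : X × X × V).2.2 + (1 - k) • E.ε (h (p : X × X × V).1))
        (p : X × X × V).2.2
        = (k • (inducedMul E h q p : X × X × V) + (1 - k) • (p : X × X × V)).2.2
      rw [inducedMul_def E h q p hq'.symm, mem1 E h p]
      exact E.smul_mul' k _ _ (comp_of E h q p hq'.symm).symm

end Aux

theorem induced_vector_groupoid {K X V V₀ : Type*} [Field K]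
    [AddCommGroup X] [Module K X] [AddCommGroup V] [Module K V]
    [AddCommGroup V₀] [Module K V₀]
    (E : VectorGroupoid K V V₀) (h : X →ₗ[K] V₀) :
    ∃ Estar : VectorGroupoid K (inducedCarrier E h) X,
      (∀ p : inducedCarrier E h, Estar.α p = (p : X × X × V).1) ∧
      (∀ p : inducedCarrier E h, Estar.β p = (p : X × X × V).2.1) ∧
      (∀ p q : inducedCarrier E h, (p : X × X × V).2.1 = (q : X × X × V).1 →
        (Estar.mul p q : X × X × V) =
          ((p : X × X × V).1, (q : X × X × V).2.1,
            E.mul (p : X × X × V).2.2 (q : X × X × V).2.2)) ∧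
      (∀ x : X, (Estar.ε x : X × X × V) = (x, x, E.ε (h x))) ∧
      (∀ p : inducedCarrier E h, (Estar.inv p : X × X × V) =
          ((p : X × X × V).2.1, (p : X × X × V).1, E.inv (p : X × X × V).2.2)) ∧
      (Function.Surjective (fun a : V => (E.α a, E.β a)) →
        Function.Surjective
          (fun g : inducedCarrier E h => (Estar.α g, Estar.β g))) := by
  refine ⟨inducedVG E h, fun p => rfl, fun p => rfl, ?_, fun x => rfl, fun p => rfl, ?_⟩
  · intro p q hc
    exact inducedMul_def E h p q hc
  · intro hsurj ⟨x, y⟩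
    obtain ⟨a, ha⟩ := hsurj (h x, h y)
    have h1 : E.α a = h x := congrArg Prod.fst ha
    have h2 : E.β a = h y := congrArg Prod.snd ha
    exact ⟨⟨(x, y, a), h1.symm, h2.symm⟩, rfl⟩
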